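/- arXiv:2602.17451 — 3 statements merged into one kernel-verified Lean document; each statement's English description precedes it below -/
import Mathlib

section
/- Let n ≥ 2 be an integer. The greatest common divisor of the binomial coefficients C(n, j) for 1 ≤ j ≤ n−1 equals p if n is a power of a prime number p, and equals 1 if n is not a prime power. -/
/-!
By Lucas' theorem, if `n = p ^ a * m` with `p ∤ m` then `C(n, p ^ a) ≡ m [ZMOD p]`, so a prime
dividing every `C(n, j)` with `0 < j < n` forces `m = 1`. For `n = p ^ k`, Kummer's theorem shows
that every such `C(n, j)` is divisible by `p`, while `C(p ^ k, p ^ (k - 1))` is not divisible by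
`p ^ 2`.
-/

lemma Nat.Ioo_zero_eq_Icc_one_sub_one (n : ℕ) : Finset.Ioo 0 n = Finset.Icc 1 (n - 1) := by
  ext j
  simp only [Finset.mem_Ioo, Finset.mem_Icc]
  omega

theorem stmt_4 (n : ℕ) (hn : 2 ≤ n) :
    (∀ p k : ℕ, p.Prime → 1 ≤ k → n = p ^ k →
        (Finset.Ioo 0 n).gcd (fun j => n.choose j) = p) ∧
    ((¬ ∃ p k : ℕ, p.Prime ∧ 1 ≤ k ∧ n = p ^ k) →
        (Finset.Ioo 0 n).gcd (fun j => n.choose j) = 1) := by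
  rw [Nat.Ioo_zero_eq_Icc_one_sub_one]
  refine ⟨fun p k hp hk hn_eq => ?_, fun h_not => ?_⟩
  · have hk0 : k ≠ 0 := by omega
    have h_pow : IsPrimePow n := hn_eq ▸ hp.isPrimePow.pow hk0
    rw [Choose.gcd_choose_eq_minFac_of_isPrimePow h_pow, hn_eq, hp.pow_minFac hk0]
  · refine Choose.gcd_choose_eq_one_of_not_isPrimePow hn fun h_pow => h_not ?_
    obtain ⟨p, k, hp, hk, rfl⟩ := (isPrimePow_nat_iff n).mp h_pow
    exact ⟨p, k, hp, hk, rfl⟩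
end

section
/- Let R be a commutative ring and h ∈ R[[t]] a power series whose constant coefficient is a nonzerodivisor in R. Then the intersection over all k ∈ ℕ of the ideals (t^k) + (h) of R[[t]] equals the ideal (h). Equivalently, in the quotient ring B = R[[t]]/(h), the intersection of the ideals t^k·B over all k ∈ ℕ is zero. -/
/-!
Because its constant coefficient is a nonzerodivisor, `h` stays a nonzerodivisor modulo every
`X ^ k`. So if `f ≡ b k * h` modulo `X ^ k` for every `k`, the quotients `b k` form an `X`-adic
Cauchy sequence; its limit `g` satisfies `f ≡ g * h` modulo every `X ^ k`, hence `f = g * h`.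
-/

namespace PowerSeries

variable {R : Type*} [CommRing R]

theorem eq_zero_of_forall_X_pow_dvd {f : R⟦X⟧} (hf : ∀ k : ℕ, (X : R⟦X⟧) ^ k ∣ f) : f = 0 := by
  ext n
  exact X_pow_dvd_iff.mp (hf (n + 1)) n n.lt_succ_self

theorem X_pow_dvd_of_X_pow_dvd_mul_right {h : R⟦X⟧} (hc : constantCoeff h ∈ nonZeroDivisors R)
    {u : R⟦X⟧} {k : ℕ} (hu : (X : R⟦X⟧) ^ k ∣ u * h) : (X : R⟦X⟧) ^ k ∣ u := by
  induction k with
  | zero => exact one_dvd u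
  | succ k ih =>
    obtain ⟨v, rfl⟩ := ih (dvd_trans (pow_dvd_pow X k.le_succ) hu)
    obtain ⟨w, hw⟩ := hu
    have hvh : v * h = X * w := X_pow_mul_injective (k := k) <| by
      simp only [← mul_assoc, hw, pow_succ]
    have hv : constantCoeff v = 0 := by
      apply hc.2
      rw [← map_mul, hvh, map_mul, constantCoeff_X, zero_mul]
    rw [pow_succ]
    exact mul_dvd_mul_left _ (X_dvd_iff.mpr hv)

theorem exists_forall_X_pow_dvd_sub {b : ℕ → R⟦X⟧}
    (hb : ∀ k m : ℕ, k ≤ m → (X : R⟦X⟧) ^ k ∣ b m - b k) :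
    ∃ g : R⟦X⟧, ∀ k : ℕ, (X : R⟦X⟧) ^ k ∣ g - b k := by
  refine ⟨mk fun n ↦ coeff n (b (n + 1)), fun k ↦ X_pow_dvd_iff.mpr fun n hn ↦ ?_⟩
  have hstable := X_pow_dvd_iff.mp (hb (n + 1) k hn) n n.lt_succ_self
  rw [map_sub, sub_eq_zero] at hstable
  rw [map_sub, coeff_mk, hstable, sub_self]

end PowerSeries

open PowerSeries in
theorem stmt_11 (R : Type*) [CommRing R] (h : PowerSeries R)
    (hc : PowerSeries.constantCoeff h ∈ nonZeroDivisors R) :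
    (⨅ k : ℕ, (Ideal.span {(PowerSeries.X : PowerSeries R) ^ k} + Ideal.span {h}))
      = Ideal.span {h} := by
  refine le_antisymm (fun f hf ↦ ?_) (le_iInf fun _ ↦ le_sup_right)
  have happrox : ∀ k : ℕ, ∃ b : R⟦X⟧, (X : R⟦X⟧) ^ k ∣ f - b * h := by
    intro k
    obtain ⟨a, ha, _, hb, rfl⟩ := Submodule.mem_sup.mp (Submodule.mem_iInf _ |>.mp hf k)
    obtain ⟨b, rfl⟩ := Ideal.mem_span_singleton'.mp hb
    exact ⟨b, by simpa using Ideal.mem_span_singleton.mp ha⟩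
  choose b hb using happrox
  have hcauchy : ∀ k m : ℕ, k ≤ m → (X : R⟦X⟧) ^ k ∣ b m - b k := fun k m hkm ↦
    X_pow_dvd_of_X_pow_dvd_mul_right hc <| by
      simpa [sub_mul] using dvd_sub (hb k) (dvd_trans (pow_dvd_pow X hkm) (hb m))
  obtain ⟨g, hg⟩ := exists_forall_X_pow_dvd_sub hcauchy
  have hfg : f = g * h := sub_eq_zero.mp <| eq_zero_of_forall_X_pow_dvd fun k ↦ by
    simpa [sub_mul] using dvd_sub (hb k) (dvd_mul_of_dvd_left (hg k) h)
  exact Ideal.mem_span_singleton'.mpr ⟨g, hfg.symm⟩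
end

section
/- Let A be a commutative ring, N ⊆ ℕ∖{0}, and q ≥ 1 an integer. In the polynomial ring A[T_i : i ∈ N], give T_i the weight ⌊i/q⌋ and let F^d ⊆ A[T_i] be the A-submodule spanned by monomials of weight at most d. Define G^d to be the smallest family of additive subgroups of A[T_i] (indexed by d ∈ ℕ, increasing in d) such that: (a) every polynomial all of whose monomials have ordinary weighted degree j (with T_i of degree i) lies in G^{⌊j/q⌋}, and (b) G^d · G^e ⊆ G^{d+e}. Then G^d = F^d for every d ∈ ℕ. -/
/-- The ordinary weighted degree of a monomial (exponent vector) in the variables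
`T_i`, `i ∈ N`, where `T_i` has degree `i`. -/
def ordWeight (N : Set ℕ) (m : N →₀ ℕ) : ℕ := ∑ i ∈ m.support, m i * (i : ℕ)

/-- The `q`-weight of a monomial: `T_i` has weight `⌊i / q⌋`. -/
def qWeight (N : Set ℕ) (q : ℕ) (m : N →₀ ℕ) : ℕ := ∑ i ∈ m.support, m i * ((i : ℕ) / q)

/-- The `A`-submodule spanned by the monomials of `q`-weight at most `d`. -/
noncomputable def F (A : Type*) [CommRing A] (N : Set ℕ) (q d : ℕ) :
    Submodule A (MvPolynomial N A) :=
  Submodule.span A {f | ∃ m : N →₀ ℕ, qWeight N q m ≤ d ∧ f = MvPolynomial.monomial m 1}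

/-- A family of additive subgroups `H d` satisfies the defining conditions of the
`q`-filtration: it is increasing, contains every polynomial all of whose monomials
have ordinary weighted degree `j` in level `⌊j / q⌋`, and is multiplicative. -/
def GoodFamily (A : Type*) [CommRing A] (N : Set ℕ) (q : ℕ)
    (H : ℕ → AddSubgroup (MvPolynomial N A)) : Prop :=
  (∀ d e : ℕ, d ≤ e → H d ≤ H e) ∧
  (∀ (j : ℕ) (f : MvPolynomial N A),
      (∀ m ∈ f.support, ordWeight N m = j) → f ∈ H (j / q)) ∧
  (∀ (d e : ℕ) (x y : MvPolynomial N A), x ∈ H d → y ∈ H e → x * y ∈ H (d + e))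

/-- The smallest family of additive subgroups satisfying the conditions above. -/
noncomputable def G (A : Type*) [CommRing A] (N : Set ℕ) (q d : ℕ) :
    AddSubgroup (MvPolynomial N A) :=
  ⨅ H ∈ {H : ℕ → AddSubgroup (MvPolynomial N A) | GoodFamily A N q H}, H d

/-!
Both inclusions come from comparing the two filtrations on monomials. Since `⌊i/q⌋` is
additive in the exponents and `∑ eᵢ ⌊i/q⌋ ≤ ⌊∑ eᵢ i / q⌋`, the spans `F^d` form a family with
properties (a) and (b), so `G^d ⊆ F^d` by minimality. Conversely, in any such family `Tᵢ` lies
in level `⌊i/q⌋` by (a), so by (b) a monomial of `q`-weight `w` lies in level `w`; scalars lie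
in level `0`, hence every `A`-linear combination of monomials of `q`-weight `≤ d` lies in
level `d`.
-/

open MvPolynomial

section

variable {A : Type*} [CommRing A] {N : Set ℕ} {q : ℕ}

lemma qWeight_add (m m' : N →₀ ℕ) : qWeight N q (m + m') = qWeight N q m + qWeight N q m' :=
  Finsupp.sum_add_index' (h := fun (i : N) e => e * ((i : ℕ) / q)) (fun _ => zero_mul _)
    (fun _ _ _ => add_mul _ _ _)

lemma qWeight_le_ordWeight_div (m : N →₀ ℕ) : qWeight N q m ≤ ordWeight N m / q := by
  rcases Nat.eq_zero_or_pos q with rfl | hq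
  · simp [qWeight]
  rw [Nat.le_div_iff_mul_le hq, qWeight, ordWeight, Finset.sum_mul]
  refine Finset.sum_le_sum fun i _ => ?_
  rw [mul_assoc]
  exact Nat.mul_le_mul_left _ (Nat.div_mul_le_self _ _)

lemma monomial_one_mem_F {m : N →₀ ℕ} {d : ℕ} (hm : qWeight N q m ≤ d) :
    (monomial m 1 : MvPolynomial N A) ∈ F A N q d :=
  Submodule.subset_span ⟨m, hm, rfl⟩

lemma F_mono {d e : ℕ} (hde : d ≤ e) : F A N q d ≤ F A N q e :=
  Submodule.span_mono fun _ ⟨m, hm, hf⟩ => ⟨m, hm.trans hde, hf⟩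

lemma F_mul_le (d e : ℕ) : F A N q d * F A N q e ≤ F A N q (d + e) := by
  rw [F, F, Submodule.span_mul_span, Submodule.span_le]
  rintro _ ⟨_, ⟨m, hm, rfl⟩, _, ⟨m', hm', rfl⟩, rfl⟩
  change monomial m 1 * monomial m' 1 ∈ F A N q (d + e)
  rw [monomial_mul, one_mul]
  exact monomial_one_mem_F ((qWeight_add m m').trans_le (add_le_add hm hm'))

lemma mem_F_of_ordWeight_eq {f : MvPolynomial N A} {j : ℕ}
    (hf : ∀ m ∈ f.support, ordWeight N m = j) : f ∈ F A N q (j / q) := by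
  rw [f.as_sum]
  refine Submodule.sum_mem _ fun m hm => ?_
  rw [← mul_one (coeff m f), ← smul_eq_mul, ← smul_monomial]
  exact Submodule.smul_mem _ _ <|
    monomial_one_mem_F ((hf m hm) ▸ qWeight_le_ordWeight_div m)

lemma goodFamily_F : GoodFamily A N q fun d => (F A N q d).toAddSubgroup :=
  ⟨fun _ _ hde => F_mono hde, fun _ _ hf => mem_F_of_ordWeight_eq hf,
    fun d e _ _ hx hy => F_mul_le d e (Submodule.mul_mem_mul hx hy)⟩

namespace GoodFamily

variable {H : ℕ → AddSubgroup (MvPolynomial N A)} (hH : GoodFamily A N q H)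
include hH

lemma monomial_mem (m : N →₀ ℕ) (a : A) : monomial m a ∈ H (ordWeight N m / q) :=
  hH.2.1 _ _ fun _ hm' => by rw [Finset.mem_singleton.1 (support_monomial_subset hm')]

lemma C_mem (a : A) : (C a : MvPolynomial N A) ∈ H 0 := by
  simpa [ordWeight] using hH.monomial_mem 0 a

lemma X_mem (i : N) : (X i : MvPolynomial N A) ∈ H ((i : ℕ) / q) := by
  rw [X]
  simpa [ordWeight] using hH.monomial_mem (Finsupp.single i 1) 1

lemma pow_mem {x : MvPolynomial N A} {d : ℕ} (hx : x ∈ H d) (n : ℕ) : x ^ n ∈ H (n * d) := by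
  induction n with
  | zero => simpa using hH.C_mem 1
  | succ n ih => simpa [pow_succ, Nat.succ_mul] using hH.2.2 _ _ _ _ ih hx

lemma prod_mem {ι : Type*} (s : Finset ι) {f : ι → MvPolynomial N A} {d : ι → ℕ}
    (hf : ∀ i ∈ s, f i ∈ H (d i)) : ∏ i ∈ s, f i ∈ H (∑ i ∈ s, d i) := by
  classical
  induction s using Finset.induction_on with
  | empty => simpa using hH.C_mem 1
  | insert i s hi ih =>
    rw [Finset.prod_insert hi, Finset.sum_insert hi]
    exact hH.2.2 _ _ _ _ (hf i (Finset.mem_insert_self i s))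
      (ih fun k hk => hf k (Finset.mem_insert_of_mem hk))

lemma monomial_one_mem (m : N →₀ ℕ) : (monomial m 1 : MvPolynomial N A) ∈ H (qWeight N q m) := by
  rw [monomial_eq, map_one, one_mul]
  exact hH.prod_mem _ fun i _ => hH.pow_mem (hH.X_mem i) (m i)

lemma F_le (d : ℕ) : (F A N q d).toAddSubgroup ≤ H d := by
  intro x hx
  induction hx using Submodule.span_induction with
  | mem _ hf =>
    obtain ⟨m, hm, rfl⟩ := hf
    exact hH.1 _ _ hm (hH.monomial_one_mem m)
  | zero => exact zero_mem _
  | add _ _ _ _ hx hy => exact add_mem hx hy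
  | smul a _ _ hx => simpa [smul_eq_C_mul] using hH.2.2 _ _ _ _ (hH.C_mem a) hx

end GoodFamily

end

theorem stmt_18_general (A : Type*) [CommRing A] (N : Set ℕ)
    (q : ℕ) (d : ℕ) :
    G A N q d = (F A N q d).toAddSubgroup :=
  le_antisymm (iInf₂_le (fun d => (F A N q d).toAddSubgroup) goodFamily_F)
    (le_iInf₂ fun _ hH => hH.F_le d)

theorem stmt_18 (A : Type*) [CommRing A] (N : Set ℕ) (hN : 0 ∉ N)
    (q : ℕ) (hq : 1 ≤ q) (d : ℕ) :
    G A N q d = (F A N q d).toAddSubgroup :=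
  stmt_18_general A N q d
end
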